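/- arXiv:2405.07000 — 2 statements merged into one kernel-verified Lean document; each statement's English description precedes it below -/
import Mathlib

section
/- Let A be a Noetherian ring and U a subset of Spec(A). Then U is open if and only if: (i) for every prime q in U, U contains a nonempty open subset of V(q); and (ii) for all primes p, q with p in U and p ⊇ q, also q is in U. -/
/-!
In a Noetherian space one shows by Noetherian induction that `Z \ U` is closed for every closed
`Z`. A reducible `Z` is the union of two proper closed subsets. An irreducible `Z` meeting `U`
has its generic point in `U` by stability under generalization, so (i) yields an open `W` with
`∅ ≠ W ∩ Z ⊆ U`, and `Z \ U = (Z \ W) \ U` with `Z \ W` a proper closed subset. The prime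
spectrum of a Noetherian ring is a Noetherian sober space, where `V(q)` is the closure of `q`
and `q ⊆ p` means that `q` generalizes `p`.
-/
open TopologicalSpace Set

namespace TopologicalSpace.NoetherianSpace

variable {X : Type*} [TopologicalSpace X]

theorem isClosed_induction [NoetherianSpace X] {P : Set X → Prop}
    (step : ∀ Z, IsClosed Z → (∀ Z', IsClosed Z' → Z' ⊂ Z → P Z') → P Z)
    {Z : Set X} (hZ : IsClosed Z) : P Z := by
  suffices ∀ C : Closeds X, P C from this ⟨Z, hZ⟩
  intro C
  induction C using WellFoundedLT.induction with
  | _ C IH => exact step C C.isClosed fun Z' hZ' hlt => IH ⟨Z', hZ'⟩ hlt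

end TopologicalSpace.NoetherianSpace

section NagataCriterion

variable {X : Type*} [TopologicalSpace X] {U Z : Set X}

theorem isClosed_diff_of_not_isPreirreducible (hZ : IsClosed Z) (hred : ¬IsPreirreducible Z)
    (IH : ∀ Z', IsClosed Z' → Z' ⊂ Z → IsClosed (Z' \ U)) : IsClosed (Z \ U) := by
  simp only [IsPreirreducible, not_forall, exists_prop] at hred
  obtain ⟨u, v, hu, hv, ⟨x, hxZ, hxu⟩, ⟨y, hyZ, hyv⟩, huv⟩ := hred
  have hcover : Z = (Z \ u) ∪ (Z \ v) := by
    ext w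
    have := fun hw : w ∈ Z ∩ (u ∩ v) => huv ⟨w, hw⟩
    grind
  rw [hcover, union_sdiff_distrib]
  exact (IH _ (hZ.sdiff hu) (sdiff_ssubset_left_iff.2 ⟨x, hxZ, hxu⟩)).union
    (IH _ (hZ.sdiff hv) (sdiff_ssubset_left_iff.2 ⟨y, hyZ, hyv⟩))

theorem isClosed_diff_of_isIrreducible [QuasiSober X] (hgen : StableUnderGeneralization U)
    (hloc : ∀ x ∈ U, ∃ W, IsOpen W ∧ (W ∩ closure {x}).Nonempty ∧ W ∩ closure {x} ⊆ U)
    (hZ : IsClosed Z) (hirr : IsIrreducible Z)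
    (IH : ∀ Z', IsClosed Z' → Z' ⊂ Z → IsClosed (Z' \ U)) : IsClosed (Z \ U) := by
  rcases (Z ∩ U).eq_empty_or_nonempty with hempty | ⟨p, hpZ, hpU⟩
  · rwa [sdiff_eq_left.2 (disjoint_iff_inter_eq_empty.2 hempty)]
  have hclosure : closure {hirr.genericPoint} = Z := hirr.closure_genericPoint hZ
  have hgenU : hirr.genericPoint ∈ U :=
    hgen (specializes_iff_mem_closure.2 (hclosure.symm ▸ hpZ)) hpU
  obtain ⟨W, hW, hWne, hWU⟩ := hloc _ hgenU
  rw [hclosure] at hWne hWU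
  have hdiff : Z \ U = (Z \ W) \ U := by
    ext w
    have := fun hw : w ∈ W ∩ Z => hWU hw
    grind
  rw [hdiff]
  exact IH _ (hZ.sdiff hW) (sdiff_ssubset_left_iff.2 (inter_comm W Z ▸ hWne))

theorem isOpen_iff_exists_isOpen_inter_closure_subset_and_stableUnderGeneralization
    [NoetherianSpace X] [QuasiSober X] :
    IsOpen U ↔ (∀ x ∈ U, ∃ W, IsOpen W ∧ (W ∩ closure {x}).Nonempty ∧ W ∩ closure {x} ⊆ U) ∧
      StableUnderGeneralization U := by
  refine ⟨fun hU => ⟨fun x hx => ⟨U, hU, ⟨x, hx, subset_closure rfl⟩, inter_subset_left⟩,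
    hU.stableUnderGeneralization⟩, fun ⟨hloc, hgen⟩ => ?_⟩
  suffices IsClosed (univ \ U) by rwa [← compl_eq_univ_sdiff, isClosed_compl_iff] at this
  refine NoetherianSpace.isClosed_induction (P := fun Z => IsClosed (Z \ U)) ?_ isClosed_univ
  intro Z hZ IH
  by_cases hirr : IsIrreducible Z
  · exact isClosed_diff_of_isIrreducible hgen hloc hZ hirr IH
  rcases Z.eq_empty_or_nonempty with rfl | hne
  · simp
  · exact isClosed_diff_of_not_isPreirreducible hZ (fun h => hirr ⟨hne, h⟩) IH

end NagataCriterion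

/-- **Topological Nagata criterion for openness.**
Let `A` be a Noetherian ring and `U` a subset of `Spec A`.  Then `U` is open if and only if:
(i) for every prime `q ∈ U`, `U` contains a nonempty subset of `V(q)` which is open in `V(q)`;
(ii) for all primes `p, q` with `p ∈ U` and `p ⊇ q`, also `q ∈ U`. -/
theorem nagata_criterion_openness (A : Type*) [CommRing A] [IsNoetherianRing A]
    (U : Set (PrimeSpectrum A)) :
    IsOpen U ↔
      ((∀ q ∈ U, ∃ W : Set (PrimeSpectrum A), IsOpen W ∧
          (W ∩ PrimeSpectrum.zeroLocus (q.asIdeal : Set A)).Nonempty ∧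
          W ∩ PrimeSpectrum.zeroLocus (q.asIdeal : Set A) ⊆ U) ∧
        (∀ p q : PrimeSpectrum A, p ∈ U → q.asIdeal ≤ p.asIdeal → q ∈ U)) := by
  simp only [← PrimeSpectrum.closure_singleton]
  rw [isOpen_iff_exists_isOpen_inter_closure_subset_and_stableUnderGeneralization]
  refine and_congr_right fun _ => ⟨fun h p q hp hle => h ?_ hp, fun h p q hqp hp => h p q hp ?_⟩
  · exact (PrimeSpectrum.le_iff_specializes q p).1 hle
  · exact (PrimeSpectrum.le_iff_specializes q p).2 hqp
end

section
/- Let (R, m, κ) be a Noetherian local ring with κ infinite, I = (f_1,...,f_m) a proper ideal, P = Proj(Rees(I)) the blowup of Spec(R) along I with projection π, and E the exceptional divisor. For a general element g = a_1 f_1 + ... + a_m f_m of I with associated linear form ℓ = a_1 y_1 + ... + a_m y_m in the Rees algebra, the pullback π*V(g) and the hyperplane H = V_+(ℓ) are effective Cartier divisors on P, and π*V(g) = E + H as divisors. -/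
/-!
Fix a chart `C = R[I/f_i]`. It is a finitely generated `R`-algebra, hence Noetherian, and `f_i`
is a nonzerodivisor of `C` because it becomes a unit in `R_{f_i}`. The zerodivisors of `C` are
the union of its finitely many associated primes `𝔭`, none of which contains `f_i`. For each `𝔭`
the coefficient vectors `a` with `∑ a_k f_k ∈ 𝔭` form a proper submodule of `R^m`, so by
Nakayama their residues lie in a proper subspace of `κ^m`, i.e. in the zero set of a nonzero
linear form. The product of these linear forms over all charts and all associated primes is a
nonzero polynomial `F`; wherever `F` does not vanish, `g = ∑ a_k f_k` is a nonzerodivisor on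
every chart. On the chart, `g = f_i · ∑ a_k (f_k/f_i)`, which is `π*V(g) = E + H`, and `ℓ/f_i`
is a nonzerodivisor as a factor of one.
-/

open IsLocalRing
open scoped TensorProduct

namespace IsLocalRing

variable {R : Type*} [CommRing R] [IsLocalRing R]

theorem exists_linearMap_residueField_ne_zero_le_ker {M : Type*} [AddCommGroup M] [Module R M]
    [Module.Finite R M] {N : Submodule R M} (hN : N ≠ ⊤) :
    ∃ φ : M →ₗ[R] ResidueField R, φ ≠ 0 ∧ N ≤ LinearMap.ker φ := by
  let toTensor := TensorProduct.mk R (ResidueField R) M 1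
  let W : Submodule (ResidueField R) (ResidueField R ⊗[R] M) :=
    Submodule.span (ResidueField R) (N.map toTensor)
  have hW : W < ⊤ := by
    refine lt_top_iff_ne_top.2 fun hW => hN (map_tensorProduct_mk_eq_top.1 ?_)
    rw [← Submodule.span_eq (N.map toTensor),
      ← Submodule.restrictScalars_span R _ residue_surjective]
    exact congrArg (Submodule.restrictScalars R) hW
  obtain ⟨ψ, hψ, hWψ⟩ := W.exists_le_ker_of_lt_top hW
  refine ⟨(ψ.restrictScalars R).comp toTensor, fun h => hψ ?_, fun x hx => ?_⟩
  · refine TensorProduct.AlgebraTensorModule.ext fun r x => ?_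
    have hx : ψ (1 ⊗ₜ x) = 0 := LinearMap.congr_fun h x
    rw [← mul_one r, ← smul_eq_mul, ← TensorProduct.smul_tmul', map_smul, hx, smul_zero,
      LinearMap.zero_apply]
  · exact hWψ (Submodule.subset_span ⟨x, hx, rfl⟩)

end IsLocalRing

section General

variable {R : Type*} [CommRing R] [IsLocalRing R] {ι : Type*}

def HoldsForGeneral (P : (ι → R) → Prop) : Prop :=
  ∃ F : MvPolynomial ι (ResidueField R), F ≠ 0 ∧
    ∀ a : ι → R, MvPolynomial.eval (fun k => residue R (a k)) F ≠ 0 → P a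

theorem HoldsForGeneral.mono {P Q : (ι → R) → Prop} (hP : HoldsForGeneral P)
    (hPQ : ∀ a, P a → Q a) : HoldsForGeneral Q :=
  let ⟨F, hF, hFP⟩ := hP
  ⟨F, hF, fun a ha => hPQ a (hFP a ha)⟩

theorem holdsForGeneral_forall {J : Type*} [Finite J] {P : J → (ι → R) → Prop}
    (hP : ∀ j, HoldsForGeneral (P j)) : HoldsForGeneral fun a => ∀ j, P j a := by
  have := Fintype.ofFinite J
  choose F hF hFP using hP
  refine ⟨∏ j, F j, Finset.prod_ne_zero_iff.2 fun j _ => hF j, fun a ha j => hFP j a ?_⟩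
  rw [map_prod, Finset.prod_ne_zero_iff] at ha
  exact ha j (Finset.mem_univ j)

theorem holdsForGeneral_notMem [Fintype ι] {Z : Submodule R (ι → R)} (hZ : Z ≠ ⊤) :
    HoldsForGeneral (· ∉ Z) := by
  classical
  obtain ⟨φ, hφ, hZφ⟩ := exists_linearMap_residueField_ne_zero_le_ker hZ
  let F : MvPolynomial ι (ResidueField R) :=
    ∑ k, MvPolynomial.C (φ (Pi.single k 1)) * MvPolynomial.X k
  have hF : ∀ a : ι → R, MvPolynomial.eval (fun k => residue R (a k)) F = φ a := by
    intro a
    simp only [F, φ.pi_apply_eq_sum_univ a, map_sum, map_mul, MvPolynomial.eval_C,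
      MvPolynomial.eval_X, Algebra.smul_def, mul_comm]
    refine Finset.sum_congr rfl fun k _ => ?_
    rw [ResidueField.algebraMap_eq]
    congr 2
    ext j
    simp [Pi.single_apply, eq_comm]
  obtain ⟨v, hv⟩ : ∃ v, φ v ≠ 0 := by
    by_contra! h
    exact hφ (LinearMap.ext h)
  exact ⟨F, fun h => hv (by rw [← hF, h, map_zero]), fun a ha haZ => by
    rw [hF] at ha
    exact ha (hZφ haZ)⟩

end General

theorem holdsForGeneral_algebraMap_sum_mul_mem_nonZeroDivisors {R A : Type*} [CommRing R]
    [IsLocalRing R] [CommRing A] [IsNoetherianRing A] [Algebra R A] {ι : Type*} [Fintype ι]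
    (f : ι → R) (i : ι) (hi : algebraMap R A (f i) ∈ nonZeroDivisors A) :
    HoldsForGeneral fun a : ι → R => algebraMap R A (∑ k, a k * f k) ∈ nonZeroDivisors A := by
  classical
  have hzd : ∀ x : A, x ∉ nonZeroDivisors A ↔ ∃ 𝔭 ∈ associatedPrimes A A, x ∈ 𝔭 := fun x => by
    simpa using (Set.ext_iff.1 (biUnion_associatedPrimes_eq_compl_nonZeroDivisors A) x).symm
  let Z (𝔭 : associatedPrimes A A) : Submodule R (ι → R) :=
    Submodule.comap (Fintype.linearCombination R f) (Ideal.comap (algebraMap R A) 𝔭.1)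
  have hmemZ (𝔭 : associatedPrimes A A) (a : ι → R) :
      a ∈ Z 𝔭 ↔ algebraMap R A (∑ k, a k * f k) ∈ 𝔭.1 := by
    simp [Z, Fintype.linearCombination_apply]
  have hZ (𝔭 : associatedPrimes A A) : Z 𝔭 ≠ ⊤ := fun h => by
    have hsingle : Pi.single i 1 ∈ Z 𝔭 := h ▸ Submodule.mem_top
    simp only [Z, Submodule.mem_comap, Fintype.linearCombination_apply_single, one_smul,
      Ideal.mem_comap] at hsingle
    exact (hzd _).2 ⟨𝔭.1, 𝔭.2, hsingle⟩ hi
  have := (associatedPrimes.finite A A).to_subtype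
  refine (holdsForGeneral_forall fun 𝔭 => holdsForGeneral_notMem (hZ 𝔭)).mono fun a ha => ?_
  by_contra hg
  obtain ⟨𝔭, h𝔭, hg𝔭⟩ := (hzd _).1 hg
  exact ha ⟨𝔭, h𝔭⟩ ((hmemZ ⟨𝔭, h𝔭⟩ a).2 hg𝔭)

section BlowupChart

variable {R : Type*} [CommRing R] {ι : Type*}

def blowupChart (f : ι → R) (i : ι) : Subalgebra R (Localization.Away (f i)) :=
  Algebra.adjoin R (Set.range fun j : ι =>
    IsLocalization.mk' (Localization.Away (f i)) (f j)
      (⟨f i, Submonoid.mem_powers _⟩ : Submonoid.powers (f i)))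

instance [IsNoetherianRing R] [Finite ι] (f : ι → R) (i : ι) :
    IsNoetherianRing (blowupChart f i) :=
  isNoetherianRing_of_fg (Subalgebra.fg_def.2 ⟨_, Set.finite_range _, rfl⟩)

theorem algebraMap_mem_nonZeroDivisors_blowupChart (f : ι → R) (i : ι) :
    algebraMap R (blowupChart f i) (f i) ∈ nonZeroDivisors (blowupChart f i) :=
  mem_nonZeroDivisors_of_injective (f := (blowupChart f i).val) Subtype.val_injective
    (IsLocalization.Away.algebraMap_isUnit (f i)).mem_nonZeroDivisors

theorem exists_blowupChart_equations [Fintype ι] (f a : ι → R) (i : ι)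
    (hg : algebraMap R (blowupChart f i) (∑ k, a k * f k) ∈ nonZeroDivisors (blowupChart f i)) :
    ∃ gEl fEl ℓEl : blowupChart f i,
      (gEl : Localization.Away (f i)) = algebraMap R _ (∑ k, a k * f k) ∧
      (fEl : Localization.Away (f i)) = algebraMap R _ (f i) ∧
      (ℓEl : Localization.Away (f i)) =
        ∑ k, algebraMap R _ (a k) *
          IsLocalization.mk' (Localization.Away (f i)) (f k)
            (⟨f i, Submonoid.mem_powers _⟩ : Submonoid.powers (f i)) ∧
      gEl ∈ nonZeroDivisors (blowupChart f i) ∧ ℓEl ∈ nonZeroDivisors (blowupChart f i) ∧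
      Ideal.span {gEl} = Ideal.span {fEl} * Ideal.span {ℓEl} := by
  let ℓEl : blowupChart f i := ∑ k, algebraMap R _ (a k) * ⟨_, Algebra.subset_adjoin ⟨k, rfl⟩⟩
  have hℓ : (ℓEl : Localization.Away (f i)) = ∑ k, algebraMap R _ (a k) *
      IsLocalization.mk' (Localization.Away (f i)) (f k)
        (⟨f i, Submonoid.mem_powers _⟩ : Submonoid.powers (f i)) := by
    simp [ℓEl]
  have hfactor : algebraMap R _ (f i) * ℓEl = algebraMap R _ (∑ k, a k * f k) := by
    apply Subtype.ext
    simp only [Subalgebra.coe_mul, Subalgebra.coe_algebraMap, hℓ, Finset.mul_sum, map_sum,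
      AddSubmonoidClass.coe_finsetSum,
      map_mul, mul_left_comm _ (algebraMap R _ (a _)), IsLocalization.mk'_spec'_mk]
  refine ⟨algebraMap R _ (∑ k, a k * f k), algebraMap R _ (f i), ℓEl, rfl, rfl, hℓ, hg, (mul_mem_nonZeroDivisors.1 (hfactor ▸ hg)).2, ?_⟩
  rw [← hfactor, Ideal.span_singleton_mul_span_singleton]

end BlowupChart

theorem pullback_eq_exceptional_add_hyperplane_general
    {R : Type*} [CommRing R] [IsNoetherianRing R] [IsLocalRing R]
    {m : ℕ} (f : Fin m → R) :
    ∃ F : MvPolynomial (Fin m) (IsLocalRing.ResidueField R), F ≠ 0 ∧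
      ∀ a : Fin m → R,
        MvPolynomial.eval (fun k => IsLocalRing.residue R (a k)) F ≠ 0 →
        ∀ i : Fin m,
          -- the chart ring `C = R[I/f_i] ⊆ R_{f_i}`
          ∀ C : Subalgebra R (Localization.Away (f i)),
            C = Algebra.adjoin R (Set.range fun j : Fin m =>
              IsLocalization.mk' (Localization.Away (f i)) (f j)
                (⟨f i, Submonoid.mem_powers _⟩ : Submonoid.powers (f i))) →
          ∃ gEl fEl ℓEl : C,
            -- `gEl` is the local equation of `π*V(g)`
            (gEl : Localization.Away (f i)) =
              algebraMap R _ (∑ k, a k * f k) ∧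
            -- `fEl` is the local equation of the exceptional divisor `E`
            (fEl : Localization.Away (f i)) = algebraMap R _ (f i) ∧
            -- `ℓEl` is the local equation of the hyperplane `H`
            (ℓEl : Localization.Away (f i)) =
              ∑ k, algebraMap R _ (a k) *
                IsLocalization.mk' (Localization.Away (f i)) (f k)
                  (⟨f i, Submonoid.mem_powers _⟩ : Submonoid.powers (f i)) ∧
            -- `π*V(g)` and `H` are effective Cartier divisors
            gEl ∈ nonZeroDivisors C ∧ ℓEl ∈ nonZeroDivisors C ∧
            -- `π*V(g) = E + H`
            Ideal.span {gEl} = Ideal.span {fEl} * Ideal.span {ℓEl} := by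
  obtain ⟨F, hF, hgeneral⟩ := holdsForGeneral_forall fun i =>
    holdsForGeneral_algebraMap_sum_mul_mem_nonZeroDivisors f i
      (algebraMap_mem_nonZeroDivisors_blowupChart f i)
  refine ⟨F, hF, fun a ha i C hC => ?_⟩
  subst hC
  exact exists_blowupChart_equations f a i (hgeneral a ha i)

set_option synthInstance.maxHeartbeats 1000000 in
/-- **`π*D = E + H` on the blowup.**  Let `(R, 𝔪, κ)` be a Noetherian local ring with `κ`
infinite, `I = (f_1, …, f_m)` a proper ideal, and `P = Proj(Rees I)` the blowup of `Spec R`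
along `I`, covered by the charts `U_i = Spec R[I/f_i]` (where `R[I/f_i] ⊆ R_{f_i}` is generated
by the elements `f_j/f_i`).  For a general element `g = a_1 f_1 + ⋯ + a_m f_m` of `I`, with
associated hyperplane `H = V_+(a_1 y_1 + ⋯ + a_m y_m)`, the pullback `π*V(g)` and `H` are
effective Cartier divisors on `P` and `π*V(g) = E + H`, where `E` is the exceptional divisor:
on each chart `U_i`, the local equation `g` of `π*V(g)` and the local equation
`ℓ/f_i = ∑ a_j (f_j/f_i)` of `H` are nonzerodivisors of `R[I/f_i]`, and the principal ideal
`(g)` equals the product of the ideals `(f_i)` (the local equation of `E`) and `(ℓ/f_i)`. -/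
theorem pullback_eq_exceptional_add_hyperplane
    {R : Type*} [CommRing R] [IsNoetherianRing R] [IsLocalRing R]
    [Infinite (IsLocalRing.ResidueField R)]
    {m : ℕ} (f : Fin m → R) (hproper : Ideal.span (Set.range f) ≠ ⊤) :
    ∃ F : MvPolynomial (Fin m) (IsLocalRing.ResidueField R), F ≠ 0 ∧
      ∀ a : Fin m → R,
        MvPolynomial.eval (fun k => IsLocalRing.residue R (a k)) F ≠ 0 →
        ∀ i : Fin m,
          -- the chart ring `C = R[I/f_i] ⊆ R_{f_i}`
          ∀ C : Subalgebra R (Localization.Away (f i)),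
            C = Algebra.adjoin R (Set.range fun j : Fin m =>
              IsLocalization.mk' (Localization.Away (f i)) (f j)
                (⟨f i, Submonoid.mem_powers _⟩ : Submonoid.powers (f i))) →
          ∃ gEl fEl ℓEl : C,
            -- `gEl` is the local equation of `π*V(g)`
            (gEl : Localization.Away (f i)) =
              algebraMap R _ (∑ k, a k * f k) ∧
            -- `fEl` is the local equation of the exceptional divisor `E`
            (fEl : Localization.Away (f i)) = algebraMap R _ (f i) ∧
            -- `ℓEl` is the local equation of the hyperplane `H`
            (ℓEl : Localization.Away (f i)) =
              ∑ k, algebraMap R _ (a k) *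
                IsLocalization.mk' (Localization.Away (f i)) (f k)
                  (⟨f i, Submonoid.mem_powers _⟩ : Submonoid.powers (f i)) ∧
            -- `π*V(g)` and `H` are effective Cartier divisors
            gEl ∈ nonZeroDivisors C ∧ ℓEl ∈ nonZeroDivisors C ∧
            -- `π*V(g) = E + H`
            Ideal.span {gEl} = Ideal.span {fEl} * Ideal.span {ℓEl} :=
  pullback_eq_exceptional_add_hyperplane_general f
end
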